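/- Fix c ∈ K. Let D̃_t be the total derivative of the equation (dtmv): 𝔽̃¹ = 2ũ²₋₁·(ũ¹₀)² − 2c·ũ¹₀ − 2(ũ¹₁·ũ²₀·ũ¹₀ + ũ¹₁ − c·ũ¹₀ − α₀·ũ¹₀)/(ũ¹₀·ũ²₀ + 1), 𝔽̃² = 2ũ²₋₁ − 2α₀·ũ²₀ − 2(ũ²₀)²·(ũ¹₁·ũ²₀·ũ¹₀ + ũ¹₁ − c·ũ¹₀ − α₀·ũ¹₀)/(ũ¹₀·ũ²₀ + 1). Set Φ¹ = (ũ¹₁·ũ²₀·ũ¹₀ + ũ¹₁ − c·ũ¹₀ − α₀·ũ¹₀)/(ũ¹₀·ũ²₀ + 1) and Φ² = ũ²₀. Then Φ = (Φ¹, Φ²) is a Miura-type transformation from equation (dtmv) to the equation with right-hand sides 𝔽¹ = 2(u²₀·(u¹₀)² + α₀·u¹₀ − u¹₁), 𝔽² = 2(u²₋₁ − u¹₀·(u²₀)² − α₀·u²₀); i.e., the identities D̃_t(Φ¹) = 2(Φ²·(Φ¹)² + α₀·Φ¹ − S(Φ¹)) and D̃_t(Φ²) = 2(S⁻¹(Φ²)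 − Φ¹·(Φ²)² − α₀·Φ²) hold in F. -/
import Mathlib


open MvPolynomial

/-- Variables: `(none, ℓ)` is `α_ℓ`; `(some j, ℓ)` is `ũ^j_ℓ`. -/
abbrev VarB := Option (Fin 2) × ℤ

/-- Polynomial ring over `K` in `α_ℓ`, `ũ¹_ℓ`, `ũ²_ℓ`. -/
abbrev PolyB (K : Type) [Field K] := MvPolynomial VarB K

/-- Field of rational functions over `K` in `α_ℓ`, `ũ¹_ℓ`, `ũ²_ℓ`. -/
abbrev FB (K : Type) [Field K] := FractionRing (PolyB K)

/-- The variable `α_ℓ` (playing the role of `α(n+ℓ)`). -/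
noncomputable def al (K : Type) [Field K] (ℓ : ℤ) : FB K :=
  algebraMap (PolyB K) (FB K) (X (none, ℓ))

/-- The variable `ũ¹_ℓ`. -/
noncomputable def V1 (K : Type) [Field K] (ℓ : ℤ) : FB K :=
  algebraMap (PolyB K) (FB K) (X (some 0, ℓ))

/-- The variable `ũ²_ℓ`. -/
noncomputable def V2 (K : Type) [Field K] (ℓ : ℤ) : FB K :=
  algebraMap (PolyB K) (FB K) (X (some 1, ℓ))

/-- `𝔽̃¹` of equation (dtmv). -/
noncomputable def Feqt1 (K : Type) [Field K] (c : K) : FB K :=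
  2 * V2 K (-1) * (V1 K 0) ^ 2 - 2 * algebraMap K (FB K) c * V1 K 0 -
    2 * (V1 K 1 * V2 K 0 * V1 K 0 + V1 K 1 - algebraMap K (FB K) c * V1 K 0 -
      al K 0 * V1 K 0) / (V1 K 0 * V2 K 0 + 1)

/-- `𝔽̃²` of equation (dtmv). -/
noncomputable def Feqt2 (K : Type) [Field K] (c : K) : FB K :=
  2 * V2 K (-1) - 2 * al K 0 * V2 K 0 -
    2 * (V2 K 0) ^ 2 * (V1 K 1 * V2 K 0 * V1 K 0 + V1 K 1 - algebraMap K (FB K) c * V1 K 0 -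
      al K 0 * V1 K 0) / (V1 K 0 * V2 K 0 + 1)

/-- The first component `Φ¹` of the Miura-type transformation. -/
noncomputable def Phi1 (K : Type) [Field K] (c : K) : FB K :=
  (V1 K 1 * V2 K 0 * V1 K 0 + V1 K 1 - algebraMap K (FB K) c * V1 K 0 - al K 0 * V1 K 0) /
    (V1 K 0 * V2 K 0 + 1)

/-- The second component `Φ² = ũ²₀` of the Miura-type transformation. -/
noncomputable def Phi2 (K : Type) [Field K] : FB K := V2 K 0


set_option synthInstance.maxHeartbeats 1000000
set_option maxHeartbeats 4000000

lemma denom_ne_zero (K : Type) [Field K] (ℓ : ℤ) : V1 K ℓ * V2 K ℓ + 1 ≠ 0 := by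
  have h : V1 K ℓ * V2 K ℓ + 1 =
      algebraMap (PolyB K) (FB K) (X (some 0, ℓ) * X (some 1, ℓ) + 1) := by
    rw [map_add, map_mul, map_one]; rfl
  rw [h]
  intro hc
  have hp : (X (some 0, ℓ) * X (some 1, ℓ) + 1 : PolyB K) = 0 :=
    IsFractionRing.to_map_eq_zero_iff.mp hc
  have := congrArg (MvPolynomial.eval (0 : VarB → K)) hp
  simp at this

/-- STATEMENT 14.
`F` is the field of rational functions over a char-0 field `K` in `α_ℓ, ũ¹_ℓ, ũ²_ℓ`;
`S` is the field automorphism over `K` with `S(α_ℓ) = α_{ℓ+1}`, `S(ũ^j_ℓ) = ũ^j_{ℓ+1}`,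
and `D̃_t` is the total derivative of equation (dtmv) `∂_t ũ^j = 𝔽̃^j` (the unique
derivation with `D̃_t(α_ℓ) = 0`, `D̃_t(ũ^j_ℓ) = S^ℓ(𝔽̃^j)`); both are quantified by
these characterizing properties.  Claim: `Φ = (Φ¹, Φ²)` with
`Φ¹ = (ũ¹₁ũ²₀ũ¹₀ + ũ¹₁ − cũ¹₀ − α₀ũ¹₀)/(ũ¹₀ũ²₀ + 1)`, `Φ² = ũ²₀` is a Miura-type
transformation from (dtmv) to the equation with `𝔽¹ = 2(u²₀(u¹₀)² + α₀u¹₀ − u¹₁)`,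
`𝔽² = 2(u²₋₁ − u¹₀(u²₀)² − α₀u²₀)`:
`D̃_t(Φ¹) = 2(Φ²(Φ¹)² + α₀Φ¹ − S(Φ¹))` and
`D̃_t(Φ²) = 2(S⁻¹(Φ²) − Φ¹(Φ²)² − α₀Φ²)`. -/
theorem stmt_15 (K : Type) [Field K] [CharZero K] (c : K)
    (S : FB K ≃+* FB K)
    (hSK : ∀ x : K, S (algebraMap K (FB K) x) = algebraMap K (FB K) x)
    (hSal : ∀ ℓ : ℤ, S (al K ℓ) = al K (ℓ + 1))
    (hSu1 : ∀ ℓ : ℤ, S (V1 K ℓ) = V1 K (ℓ + 1))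
    (hSu2 : ∀ ℓ : ℤ, S (V2 K ℓ) = V2 K (ℓ + 1))
    (Dt : FB K → FB K)
    (hDadd : ∀ x y, Dt (x + y) = Dt x + Dt y)
    (hDmul : ∀ x y, Dt (x * y) = x * Dt y + Dt x * y)
    (hDK : ∀ x : K, Dt (algebraMap K (FB K) x) = 0)
    (hDal : ∀ ℓ : ℤ, Dt (al K ℓ) = 0)
    (hDu1 : ∀ ℓ : ℤ, Dt (V1 K ℓ) = (S ^ ℓ) (Feqt1 K c))
    (hDu2 : ∀ ℓ : ℤ, Dt (V2 K ℓ) = (S ^ ℓ) (Feqt2 K c)) :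
    Dt (Phi1 K c) =
      2 * (Phi2 K * (Phi1 K c) ^ 2 + al K 0 * Phi1 K c - S (Phi1 K c)) ∧
    Dt (Phi2 K) =
      2 * (S.symm (Phi2 K) - Phi1 K c * (Phi2 K) ^ 2 - al K 0 * Phi2 K) := by

  -- basic derivation facts
  have hD0 : Dt 0 = 0 := by
    have h := hDadd 0 0
    simp only [add_zero] at h
    linear_combination -h
  have hD1 : Dt 1 = 0 := by
    have := hDK 1; simpa using this
  have hDneg : ∀ x, Dt (-x) = -Dt x := by
    intro x
    have h := hDadd x (-x)
    rw [add_neg_cancel, hD0] at h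
    linear_combination -h
  have hDsub : ∀ x y, Dt (x - y) = Dt x - Dt y := by
    intro x y
    rw [sub_eq_add_neg, hDadd, hDneg, sub_eq_add_neg]
  have hDinv : ∀ x : FB K, x ≠ 0 → Dt x⁻¹ = -Dt x / x ^ 2 := by
    intro x hx
    have h := hDmul x x⁻¹
    rw [mul_inv_cancel₀ hx, hD1] at h
    linear_combination (-x⁻¹) * h - Dt x⁻¹ * (mul_inv_cancel₀ hx)
  have hDdiv : ∀ x y : FB K, y ≠ 0 → Dt (x / y) = (Dt x * y - x * Dt y) / y ^ 2 := by
    intro x y hy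
    rw [div_eq_mul_inv, hDmul, hDinv y hy]
    field_simp
    ring
  -- derivative of variables at specific shifts
  have hD10 : Dt (V1 K 0) = Feqt1 K c := by
    have := hDu1 0; simpa using this
  have hD11 : Dt (V1 K 1) = S (Feqt1 K c) := by
    have := hDu1 1; simpa using this
  have hD20 : Dt (V2 K 0) = Feqt2 K c := by
    have := hDu2 0; simpa using this
  -- S applied to things
  have hS2 : S (2 : FB K) = 2 := map_ofNat S 2
  have hSsym : S.symm (V2 K 0) = V2 K (-1) := by
    have h := hSu2 (-1)
    norm_num at h
    rw [← h, RingEquiv.symm_apply_apply]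
  have h0 := denom_ne_zero K 0
  -- division-free descriptions of the right-hand sides
  have hF1exp : Feqt1 K c =
      2 * V2 K (-1) * V1 K 0 ^ 2 - 2 * algebraMap K (FB K) c * V1 K 0 - 2 * Phi1 K c := by
    simp only [Feqt1, Phi1]
    ring
  have hF2exp : Feqt2 K c =
      2 * V2 K (-1) - 2 * al K 0 * V2 K 0 - 2 * (V2 K 0) ^ 2 * Phi1 K c := by
    simp only [Feqt2, Phi1]
    ring
  have hSF1exp : S (Feqt1 K c) =
      2 * V2 K 0 * V1 K 1 ^ 2 - 2 * algebraMap K (FB K) c * V1 K 1 - 2 * S (Phi1 K c) := by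
    have h := congrArg S hF1exp
    simp only [map_sub, map_mul, map_pow, hS2, hSK, hSu1, hSu2] at h
    norm_num at h
    exact h
  have hP : Phi1 K c * (V1 K 0 * V2 K 0 + 1) =
      V1 K 1 * V2 K 0 * V1 K 0 + V1 K 1 - algebraMap K (FB K) c * V1 K 0 -
        al K 0 * V1 K 0 := by
    rw [Phi1]
    exact div_mul_cancel₀ _ h0
  constructor
  · -- first component
    have hL := hDmul (Phi1 K c) (V1 K 0 * V2 K 0 + 1)
    rw [hP] at hL
    simp only [hDsub, hDadd, hDmul, hDK, hDal, hD10, hD11, hD20, hD1] at hL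
    rw [hSF1exp] at hL
    simp only [hF1exp, hF2exp] at hL
    have key : Dt (Phi1 K c) * (V1 K 0 * V2 K 0 + 1) =
        (2 * (Phi2 K * (Phi1 K c) ^ 2 + al K 0 * Phi1 K c - S (Phi1 K c))) *
          (V1 K 0 * V2 K 0 + 1) := by
      simp only [Phi2]
      linear_combination (-1 : FB K) * hL -
        2 * (V1 K 1 * V2 K 0 + V2 K (-1) * V1 K 0 - algebraMap K (FB K) c) * hP
    exact mul_right_cancel₀ h0 key
  · -- second component
    simp only [Phi2]
    rw [hD20, hSsym, hF2exp]
    ring
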